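/- As ρ → 0⁺, the difference between the equal-power ZFDPC-SUS and ZFBF-SUS sum rates satisfies R_DPC(ρ) − R_BF(ρ) = (ρ/ln 2) · Σ_{i=1}^{M} (1 − 1/(1 + κ_i)) λ_i |l_{i,i}|² + O(ρ²), and the leading coefficient Σ_{i=1}^{M} (1 − 1/(1 + κ_i)) λ_i |l_{i,i}|² is nonnegative; that is, the function ρ ↦ ρ^{-2} · ( R_DPC(ρ) − R_BF(ρ) − (ρ/ln 2) Σ_{i=1}^{M} (1 − 1/(1 + κ_i)) λ_i |l_{i,i}|² ) is bounded as ρ → 0⁺. -/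

import Mathlib

open Matrix Filter Finset MeasureTheory

/-- The benchmark rate `C(ρ) = log₂ det(I + ρ C Cᴴ)` with `C = Λ^{1/2} L Q`. -/
noncomputable def benchRate (M m : ℕ) (lam : Fin M → ℝ)
    (L : Matrix (Fin M) (Fin M) ℂ) (Q : Matrix (Fin M) (Fin m) ℂ) (ρ : ℝ) : ℝ :=
  Real.logb 2
    (((1 : Matrix (Fin M) (Fin M) ℂ) +
      (ρ : ℂ) • ((Matrix.diagonal (fun i => (Real.sqrt (lam i) : ℂ)) * L * Q) *
        (Matrix.diagonal (fun i => (Real.sqrt (lam i) : ℂ)) * L * Q)ᴴ)).det).re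

/-- The equal-power ZFDPC-SUS sum rate `R_DPC(ρ) = Σ_i log₂(1 + ρ λ_i |l_{i,i}|²)`. -/
noncomputable def rateDPC (M : ℕ) (lam : Fin M → ℝ)
    (L : Matrix (Fin M) (Fin M) ℂ) (ρ : ℝ) : ℝ :=
  ∑ i, Real.logb 2 (1 + ρ * lam i * Complex.normSq (L i i))

/-- The equal-power ZFBF-SUS sum rate `R_BF(ρ) = Σ_i log₂(1 + ρ λ_i / ‖t_i‖²)`,
where `‖t_i‖² = Σ_j |t_{j,i}|²` is the squared norm of the `i`-th column of `T = L⁻¹`. -/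
noncomputable def rateBF (M : ℕ) (lam : Fin M → ℝ)
    (L : Matrix (Fin M) (Fin M) ℂ) (ρ : ℝ) : ℝ :=
  ∑ i, Real.logb 2 (1 + ρ * lam i / ∑ j, Complex.normSq (L⁻¹ j i))

/-- `κ_i = Σ_{j>i} |t_{j,i}|²/|t_{i,i}|²` where `T = L⁻¹`. -/
noncomputable def kappa (M : ℕ) (L : Matrix (Fin M) (Fin M) ℂ) (i : Fin M) : ℝ :=
  ∑ j ∈ Finset.univ.filter (fun j => i < j),
    Complex.normSq (L⁻¹ j i) / Complex.normSq (L⁻¹ i i)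

/-- `η_i = Σ_{j<i} |l_{i,j}|²/|l_{i,i}|²`. -/
noncomputable def eta (M : ℕ) (L : Matrix (Fin M) (Fin M) ℂ) (i : Fin M) : ℝ :=
  ∑ j ∈ Finset.univ.filter (fun j => j < i),
    Complex.normSq (L i j) / Complex.normSq (L i i)

/-! Both rates are sums of `log₂ (1 + ρ xᵢ)` with `xᵢ ≥ 0`, so each is its linearisation
`(ρ / ln 2) Σ xᵢ` up to `ρ² Σ xᵢ² / (2 ln 2)`. For ZFDPC `xᵢ = λᵢ |lᵢᵢ|²`; for ZFBF
`xᵢ = λᵢ / ‖tᵢ‖²`, and since `T = L⁻¹` is lower triangular with `tᵢᵢ = 1 / lᵢᵢ`,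
`‖tᵢ‖² = |tᵢᵢ|² (1 + κᵢ) = (1 + κᵢ) / |lᵢᵢ|²`, i.e. `xᵢ = λᵢ |lᵢᵢ|² / (1 + κᵢ)`. -/

namespace Real

lemma abs_log_one_add_sub_self_le {x : ℝ} (hx : 0 ≤ x) : |log (1 + x) - x| ≤ x ^ 2 / 2 := by
  have hupper : log (1 + x) ≤ x := by
    linarith [log_le_sub_one_of_pos (by linarith : (0 : ℝ) < 1 + x)]
  have hlower : x - x ^ 2 / 2 ≤ 2 * x / (x + 2) := by
    rw [le_div_iff₀ (by linarith)]
    nlinarith [sq_nonneg x]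
  rw [abs_sub_comm, abs_of_nonneg (by linarith)]
  linarith [le_log_one_add_of_nonneg hx]

lemma abs_logb_one_add_sub_le {b x : ℝ} (hb : 1 < b) (hx : 0 ≤ x) :
    |logb b (1 + x) - x / log b| ≤ x ^ 2 / (2 * log b) := by
  have hlogb : 0 < log b := log_pos hb
  rw [logb, div_sub_div_same, abs_div, abs_of_pos hlogb, ← div_div]
  gcongr
  exact abs_log_one_add_sub_self_le hx

lemma abs_sum_logb_one_add_mul_sub_le {ι : Type*} [Fintype ι] {b ρ : ℝ} (hb : 1 < b)
    (hρ : 0 ≤ ρ) {x : ι → ℝ} (hx : ∀ i, 0 ≤ x i) :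
    |∑ i, logb b (1 + ρ * x i) - ρ / log b * ∑ i, x i| ≤
      ρ ^ 2 * ∑ i, x i ^ 2 / (2 * log b) := by
  calc |∑ i, logb b (1 + ρ * x i) - ρ / log b * ∑ i, x i|
      = |∑ i, (logb b (1 + ρ * x i) - ρ * x i / log b)| := by
        rw [Finset.mul_sum, ← Finset.sum_sub_distrib]
        simp only [div_mul_eq_mul_div]
    _ ≤ ∑ i, (ρ * x i) ^ 2 / (2 * log b) := by
        refine (Finset.abs_sum_le_sum_abs _ _).trans (Finset.sum_le_sum fun i _ => ?_)
        exact abs_logb_one_add_sub_le hb (mul_nonneg hρ (hx i))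
    _ = ρ ^ 2 * ∑ i, x i ^ 2 / (2 * log b) := by
        rw [Finset.mul_sum]
        simp only [mul_pow, mul_div_assoc]

end Real

namespace Matrix

variable {m R : Type*} [Fintype m] [LinearOrder m]

lemma IsLowerTriangular.mul_apply_self [NonUnitalNonAssocSemiring R] {A B : Matrix m m R}
    (hA : A.IsLowerTriangular) (hB : B.IsLowerTriangular) (i : m) :
    (A * B) i i = A i i * B i i := by
  rw [mul_apply]
  refine Finset.sum_eq_single i (fun k _ hki => ?_) (by simp)
  rcases lt_or_gt_of_ne hki with hk | hk
  · rw [hB hk, mul_zero]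
  · rw [hA hk, zero_mul]

variable [DecidableEq m] [CommRing R]

lemma IsLowerTriangular.inv {L : Matrix m m R} (hL : L.IsLowerTriangular) :
    L⁻¹.IsLowerTriangular := by
  by_cases hdet : IsUnit L.det
  · have : Invertible L := L.invertibleOfIsUnitDet hdet
    exact blockTriangular_inv_of_blockTriangular hL
  · rw [nonsing_inv_apply_not_isUnit L hdet]
    exact fun _ _ _ => rfl

lemma IsLowerTriangular.inv_apply_self_mul_apply_self {L : Matrix m m R}
    (hL : L.IsLowerTriangular) (hdet : IsUnit L.det) (i : m) : L⁻¹ i i * L i i = 1 := by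
  rw [← hL.inv.mul_apply_self hL, nonsing_inv_mul L hdet, one_apply_eq]

end Matrix

lemma kappa_nonneg {M : ℕ} (L : Matrix (Fin M) (Fin M) ℂ) (i : Fin M) : 0 ≤ kappa M L i :=
  Finset.sum_nonneg fun _ _ => div_nonneg (Complex.normSq_nonneg _) (Complex.normSq_nonneg _)

lemma sum_normSq_inv_apply_eq_mul {M : ℕ} {L : Matrix (Fin M) (Fin M) ℂ}
    (hL : L.IsLowerTriangular) {i : Fin M} (hTii : L⁻¹ i i ≠ 0) :
    ∑ j, Complex.normSq (L⁻¹ j i) = Complex.normSq (L⁻¹ i i) * (1 + kappa M L i) := by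
  have hbelow : ∑ j ∈ Finset.univ.filter (fun j => ¬ i < j), Complex.normSq (L⁻¹ j i) =
      Complex.normSq (L⁻¹ i i) := by
    refine Finset.sum_eq_single_of_mem i (by simp) fun j hj hji => ?_
    have hji : j < i := lt_of_le_of_ne (not_lt.mp (Finset.mem_filter.mp hj).2) hji
    rw [hL.inv hji, Complex.normSq_zero]
  rw [← Finset.sum_filter_add_sum_filter_not Finset.univ (fun j => i < j), hbelow, kappa,
    mul_add, mul_one, Finset.mul_sum, add_comm]
  congr 1
  refine Finset.sum_congr rfl fun j _ => (mul_div_cancel₀ _ ?_).symm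
  exact Complex.normSq_pos.mpr hTii |>.ne'

lemma sum_normSq_inv_apply_eq {M : ℕ} {L : Matrix (Fin M) (Fin M) ℂ}
    (hL : L.IsLowerTriangular) (hdiag : ∀ i, L i i ≠ 0) (i : Fin M) :
    ∑ j, Complex.normSq (L⁻¹ j i) = (1 + kappa M L i) / Complex.normSq (L i i) := by
  have hdet : IsUnit L.det := by
    rw [det_of_isLowerTriangular L hL]
    exact (Finset.prod_ne_zero_iff.mpr fun i _ => hdiag i).isUnit
  have hinv : L⁻¹ i i * L i i = 1 := hL.inv_apply_self_mul_apply_self hdet i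
  have hnormSq_inv : Complex.normSq (L⁻¹ i i) = (Complex.normSq (L i i))⁻¹ :=
    eq_inv_of_mul_eq_one_left (by rw [← Complex.normSq_mul, hinv, Complex.normSq_one])
  rw [sum_normSq_inv_apply_eq_mul hL (left_ne_zero_of_mul_eq_one hinv), hnormSq_inv,
    inv_mul_eq_div]

lemma rateBF_eq_sum_logb {M : ℕ} (lam : Fin M → ℝ) {L : Matrix (Fin M) (Fin M) ℂ}
    (hL : L.IsLowerTriangular) (hdiag : ∀ i, L i i ≠ 0) (ρ : ℝ) :
    rateBF M lam L ρ =
      ∑ i, Real.logb 2 (1 + ρ * (lam i * Complex.normSq (L i i) / (1 + kappa M L i))) := by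
  simp only [rateBF, mul_div_assoc, sum_normSq_inv_apply_eq hL hdiag, div_div_eq_mul_div,
    mul_assoc]

theorem lowSNR_diff_ZFDPC_ZFBF_general
    (M : ℕ)
    (lam : Fin M → ℝ) (hlam : ∀ i, 0 < lam i)
    (L : Matrix (Fin M) (Fin M) ℂ)
    (hLtri : ∀ i j : Fin M, i < j → L i j = 0)
    (hLdiag : ∀ i : Fin M, L i i ≠ 0) :
    0 ≤ ∑ i, (1 - 1 / (1 + kappa M L i)) * (lam i * Complex.normSq (L i i)) ∧
    ∃ B : ℝ, ∀ᶠ ρ : ℝ in nhdsWithin (0 : ℝ) (Set.Ioi 0),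
      |(ρ ^ 2)⁻¹ * (rateDPC M lam L ρ - rateBF M lam L ρ -
        (ρ / Real.log 2) *
          ∑ i, (1 - 1 / (1 + kappa M L i)) *
            (lam i * Complex.normSq (L i i)))| ≤ B := by
  set a : Fin M → ℝ := fun i => lam i * Complex.normSq (L i i)
  set c : Fin M → ℝ := fun i => a i / (1 + kappa M L i)
  have ha : ∀ i, 0 ≤ a i := fun i => mul_nonneg (hlam i).le (Complex.normSq_nonneg _)
  have hc : ∀ i, 0 ≤ c i := fun i => div_nonneg (ha i) (by linarith [kappa_nonneg L i])
  have hcoef : ∀ i, (1 - 1 / (1 + kappa M L i)) * (lam i * Complex.normSq (L i i)) = a i - c i :=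
    fun i => by simp only [c, a]; ring
  have hDPC : ∀ ρ, rateDPC M lam L ρ = ∑ i, Real.logb 2 (1 + ρ * a i) := fun ρ => by
    simp only [rateDPC, a, mul_assoc]
  simp only [hcoef, Finset.sum_sub_distrib]
  refine ⟨sub_nonneg.mpr (Finset.sum_le_sum fun i _ =>
    div_le_self (ha i) (by linarith [kappa_nonneg L i])), ?_⟩
  refine ⟨(∑ i, a i ^ 2 / (2 * Real.log 2)) + ∑ i, c i ^ 2 / (2 * Real.log 2), ?_⟩
  filter_upwards [self_mem_nhdsWithin] with ρ (hρ : 0 < ρ)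
  have hE : rateDPC M lam L ρ - rateBF M lam L ρ - ρ / Real.log 2 * (∑ i, a i - ∑ i, c i) =
      (∑ i, Real.logb 2 (1 + ρ * a i) - ρ / Real.log 2 * ∑ i, a i) -
        (∑ i, Real.logb 2 (1 + ρ * c i) - ρ / Real.log 2 * ∑ i, c i) := by
    rw [hDPC, rateBF_eq_sum_logb lam hLtri hLdiag]; ring
  rw [hE, abs_mul, abs_inv, abs_of_pos (by positivity), inv_mul_le_iff₀ (by positivity)]
  refine (abs_sub _ _).trans ?_
  rw [mul_add]
  exact add_le_add (Real.abs_sum_logb_one_add_mul_sub_le one_lt_two hρ.le ha)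
    (Real.abs_sum_logb_one_add_mul_sub_le one_lt_two hρ.le hc)

/-- Low-SNR difference between ZFDPC-SUS and ZFBF-SUS:
`R_DPC(ρ) − R_BF(ρ) = (ρ/ln 2) Σ_i (1 − 1/(1+κ_i)) λ_i |l_{i,i}|² + O(ρ²)` as `ρ → 0⁺`,
and the leading coefficient is nonnegative. -/
theorem lowSNR_diff_ZFDPC_ZFBF
    (M m : ℕ) (hM : 1 ≤ M) (hm : M ≤ m)
    (lam : Fin M → ℝ) (hlam : ∀ i, 0 < lam i)
    (L : Matrix (Fin M) (Fin M) ℂ)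
    (hLtri : ∀ i j : Fin M, i < j → L i j = 0)
    (hLdiag : ∀ i : Fin M, L i i ≠ 0)
    (Q : Matrix (Fin M) (Fin m) ℂ) (hQ : Q * Qᴴ = 1) :
    0 ≤ ∑ i, (1 - 1 / (1 + kappa M L i)) * (lam i * Complex.normSq (L i i)) ∧
    ∃ B : ℝ, ∀ᶠ ρ : ℝ in nhdsWithin (0 : ℝ) (Set.Ioi 0),
      |(ρ ^ 2)⁻¹ * (rateDPC M lam L ρ - rateBF M lam L ρ -
        (ρ / Real.log 2) *
          ∑ i, (1 - 1 / (1 + kappa M L i)) *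
            (lam i * Complex.normSq (L i i)))| ≤ B :=
  lowSNR_diff_ZFDPC_ZFBF_general M lam hlam L hLtri hLdiag
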